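/- Let λ : G → ℤ/4ℤ be a surjective group homomorphism whose restriction to each finite cyclic subgroup ⟨b_j⟩, ⟨d_k⟩, ⟨e_l⟩, ⟨g_q⟩ is injective. Then there exist an admissible automorphism α of G and an integer k with 0 ≤ k ≤ m such that, writing λ' = λ∘α: λ'(a_i)=1 for all 1≤i≤r; λ'(b_j)=1 and λ'(c_j)=0 for all 1≤j≤s; λ'(d_k)=1 for all 1≤k≤t; λ'(e_l)=2 for all 1≤l≤m; λ'(f_i)=1 for all i≤k and λ'(f_i)=0 for all k<i≤m; and λ'(g_q)=2 for all 1≤q≤n. -/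

import Mathlib

open Monoid

/-- Index type for the factors of the free product `G(r,s,t,m,n)`. -/
abbrev Idx (r s t m n : ℕ) := Fin r ⊕ Fin s ⊕ Fin t ⊕ Fin m ⊕ Fin n

/-- The factors: `r` copies of `ℤ`, `s` copies of `ℤ/4 × ℤ`, `t` copies of `ℤ/4`,
`m` copies of `ℤ/2 × ℤ`, and `n` copies of `ℤ/2` (written multiplicatively). -/
def Fac (r s t m n : ℕ) : Idx r s t m n → Type
  | .inl _ => Multiplicative ℤ
  | .inr (.inl _) => Multiplicative (ZMod 4 × ℤ)
  | .inr (.inr (.inl _)) => Multiplicative (ZMod 4)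
  | .inr (.inr (.inr (.inl _))) => Multiplicative (ZMod 2 × ℤ)
  | .inr (.inr (.inr (.inr _))) => Multiplicative (ZMod 2)

instance (r s t m n : ℕ) : (i : Idx r s t m n) → Group (Fac r s t m n i)
  | .inl _ => inferInstanceAs (Group (Multiplicative ℤ))
  | .inr (.inl _) => inferInstanceAs (Group (Multiplicative (ZMod 4 × ℤ)))
  | .inr (.inr (.inl _)) => inferInstanceAs (Group (Multiplicative (ZMod 4)))
  | .inr (.inr (.inr (.inl _))) => inferInstanceAs (Group (Multiplicative (ZMod 2 × ℤ)))
  | .inr (.inr (.inr (.inr _))) => inferInstanceAs (Group (Multiplicative (ZMod 2)))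

/-- The group `G(r,s,t,m,n)`, the free product of the factors above; this is the orbifold
fundamental group `π₁^orb(V(Γ(v),G(v)))`. -/
abbrev OrbGroup (r s t m n : ℕ) := Monoid.CoprodI (Fac r s t m n)

variable {r s t m n : ℕ}

/-- The free generator `a_i` of the `i`-th `ℤ` factor. -/
def genA (i : Fin r) : OrbGroup r s t m n :=
  CoprodI.of (show Fac r s t m n (.inl i) from Multiplicative.ofAdd (1 : ℤ))

/-- The order-4 generator `b_j` of the `j`-th `ℤ/4 × ℤ` factor. -/
def genB (j : Fin s) : OrbGroup r s t m n :=
  CoprodI.of (show Fac r s t m n (.inr (.inl j)) from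
    Multiplicative.ofAdd ((1, 0) : ZMod 4 × ℤ))

/-- The infinite-order generator `c_j` of the `j`-th `ℤ/4 × ℤ` factor. -/
def genC (j : Fin s) : OrbGroup r s t m n :=
  CoprodI.of (show Fac r s t m n (.inr (.inl j)) from
    Multiplicative.ofAdd ((0, 1) : ZMod 4 × ℤ))

/-- The order-4 generator `d_k` of the `k`-th `ℤ/4` factor. -/
def genD (k : Fin t) : OrbGroup r s t m n :=
  CoprodI.of (show Fac r s t m n (.inr (.inr (.inl k))) from
    Multiplicative.ofAdd (1 : ZMod 4))

/-- The order-2 generator `e_l` of the `l`-th `ℤ/2 × ℤ` factor. -/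
def genE (l : Fin m) : OrbGroup r s t m n :=
  CoprodI.of (show Fac r s t m n (.inr (.inr (.inr (.inl l)))) from
    Multiplicative.ofAdd ((1, 0) : ZMod 2 × ℤ))

/-- The infinite-order generator `f_l` of the `l`-th `ℤ/2 × ℤ` factor. -/
def genF (l : Fin m) : OrbGroup r s t m n :=
  CoprodI.of (show Fac r s t m n (.inr (.inr (.inr (.inl l)))) from
    Multiplicative.ofAdd ((0, 1) : ZMod 2 × ℤ))

/-- The order-2 generator `g_q` of the `q`-th `ℤ/2` factor. -/
def genG (q : Fin n) : OrbGroup r s t m n :=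
  CoprodI.of (show Fac r s t m n (.inr (.inr (.inr (.inr q)))) from
    Multiplicative.ofAdd (1 : ZMod 2))

/-- An automorphism of `G(r,s,t,m,n)` is admissible (the algebraic characterization of
realizable automorphisms from Lemma 2.2) if it sends each torsion-related generator to a
conjugate of the appropriate normal form. -/
def Admissible (α : OrbGroup r s t m n ≃* OrbGroup r s t m n) : Prop :=
  ∃ (σ : Equiv.Perm (Fin s)) (τ : Equiv.Perm (Fin t)) (γ : Equiv.Perm (Fin m))
    (ξ : Equiv.Perm (Fin n))
    (x : Fin s → OrbGroup r s t m n) (y : Fin t → OrbGroup r s t m n)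
    (u : Fin m → OrbGroup r s t m n) (z : Fin n → OrbGroup r s t m n)
    (ε : Fin s → ℤ) (δ : Fin t → ℤ) (ε' : Fin m → ℤ) (δ' : Fin n → ℤ)
    (v : Fin s → ℕ) (w : Fin m → ℕ),
    (∀ j, ε j = 1 ∨ ε j = -1) ∧ (∀ k, δ k = 1 ∨ δ k = -1) ∧
    (∀ l, ε' l = 1 ∨ ε' l = -1) ∧ (∀ q, δ' q = 1 ∨ δ' q = -1) ∧
    (∀ j, v j < 4) ∧ (∀ l, w l < 2) ∧
    (∀ j, α (genB j) = x j * genB (σ j) ^ ε j * (x j)⁻¹) ∧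
    (∀ j, α (genC j) = x j * genB (σ j) ^ v j * genC (σ j) ^ ε j * (x j)⁻¹) ∧
    (∀ k, α (genD k) = y k * genD (τ k) ^ δ k * (y k)⁻¹) ∧
    (∀ l, α (genE l) = u l * genE (γ l) ^ ε' l * (u l)⁻¹) ∧
    (∀ l, α (genF l) = u l * genE (γ l) ^ w l * genF (γ l) ^ ε' l * (u l)⁻¹) ∧
    (∀ q, α (genG q) = z q * genG (ξ q) ^ δ' q * (z q)⁻¹)

/-- `λ` is "finite injective": its restriction to each finite cyclic subgroup
`⟨b_j⟩`, `⟨d_k⟩`, `⟨e_l⟩`, `⟨g_q⟩` is injective. -/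
def InjOnTorsion {r s t m n : ℕ}
    (lam : OrbGroup r s t m n →* Multiplicative (ZMod 4)) : Prop :=
  (∀ j : Fin s, Set.InjOn lam
    ((Subgroup.zpowers (genB j) : Subgroup (OrbGroup r s t m n)) : Set (OrbGroup r s t m n))) ∧
  (∀ k : Fin t, Set.InjOn lam
    ((Subgroup.zpowers (genD k) : Subgroup (OrbGroup r s t m n)) : Set (OrbGroup r s t m n))) ∧
  (∀ l : Fin m, Set.InjOn lam
    ((Subgroup.zpowers (genE l) : Subgroup (OrbGroup r s t m n)) : Set (OrbGroup r s t m n))) ∧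
  (∀ q : Fin n, Set.InjOn lam
    ((Subgroup.zpowers (genG q) : Subgroup (OrbGroup r s t m n)) : Set (OrbGroup r s t m n)))

/-!
Injectivity on the cyclic factors forces `λ(b_j), λ(d_k) ∈ {1, 3}` and `λ(e_l) = λ(g_q) = 2`.
An automorphism of each factor (a sign on every infinite cyclic generator, and the shears
`c ↦ b^v c^{±1}`, `f ↦ e^w f^{±1}`) then gives the normal values on that factor, with
`λ(f_l) ∈ {0, 1}` and `λ(a_i) ≠ 3`; relabelling the `ℤ/2 × ℤ` factors sorts the `f_l`.
Since `λ` is onto `ℤ/4`, some generator `x` now has odd value, hence value `1`, and the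
substitution `a_i ↦ a_i x^{c_i}` with `c_i = 1 - λ(a_i)` corrects the free generators: it
fixes `x`, so `a_i ↦ a_i x^{-c_i}` is its inverse.
-/

namespace Monoid.CoprodI

variable {ι : Type*} {M N : ι → Type*} [∀ i, Monoid (M i)] [∀ i, Monoid (N i)]

def congrRight (φ : ∀ i, M i ≃* N i) : CoprodI M ≃* CoprodI N :=
  MonoidHom.toMulEquiv (lift fun i => of.comp (φ i).toMonoidHom)
    (lift fun i => of.comp (φ i).symm.toMonoidHom)
    (ext_hom _ _ fun i => MonoidHom.ext fun x => by simp)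
    (ext_hom _ _ fun i => MonoidHom.ext fun x => by simp)

@[simp]
theorem congrRight_of (φ : ∀ i, M i ≃* N i) {i : ι} (x : M i) :
    congrRight φ (of x) = of (φ i x) :=
  lift_of _ _

end Monoid.CoprodI

def AddEquiv.prodShear {A : Type*} [AddCommGroup A] (ε : ℤˣ) (v : A) :
    A × ℤ ≃+ A × ℤ where
  toFun p := (ε • p.1 + p.2 • v, ε • p.2)
  invFun p := (ε • p.1 - p.2 • v, ε • p.2)
  left_inv p := by rcases Int.units_eq_one_or ε with rfl | rfl <;> ext <;> simp
  right_inv p := by rcases Int.units_eq_one_or ε with rfl | rfl <;> ext <;> simp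
  map_add' p q := by ext <;> simp [add_smul, smul_add]; abel

theorem orderOf_map_of_injOn_zpowers {G H : Type*} [Group G] [Monoid H] (f : G →* H) {x : G}
    (hf : Set.InjOn f (Subgroup.zpowers x)) : orderOf (f x) = orderOf x := by
  have := orderOf_injective (f.comp (Subgroup.zpowers x).subtype)
    (fun a b h => Subtype.ext (hf a.2 b.2 h)) ⟨x, Subgroup.mem_zpowers x⟩
  simpa [Subgroup.orderOf_mk] using this

theorem Fin.exists_perm_iff_lt {m : ℕ} (p : Fin m → Prop) [DecidablePred p] :
    ∃ k ≤ m, ∃ γ : Equiv.Perm (Fin m), ∀ i, p (γ i) ↔ (i : ℕ) < k := by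
  set k := Fintype.card {x // p x}
  have hk : k ≤ m := by simpa using Fintype.card_subtype_le p
  have hlt : Fintype.card {i : Fin m // (i : ℕ) < k} = Fintype.card {x // p x} :=
    Fintype.card_fin_lt_of_le hk
  have hge : Fintype.card {i : Fin m // ¬ (i : ℕ) < k} = Fintype.card {x // ¬ p x} := by
    rw [Fintype.card_subtype_compl, Fintype.card_subtype_compl, hlt]
  refine ⟨k, hk, (Fintype.equivOfCardEq hlt).subtypeCongr (Fintype.equivOfCardEq hge),
    fun i => ?_⟩
  by_cases h : (i : ℕ) < k
  · simpa [Equiv.subtypeCongr, h] using ((Fintype.equivOfCardEq hlt) ⟨i, h⟩).2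
  · simpa [Equiv.subtypeCongr, h] using ((Fintype.equivOfCardEq hge) ⟨i, h⟩).2

namespace ZMod4

open Multiplicative

theorem eq_ofAdd_one_or_three {y : Multiplicative (ZMod 4)} (hy : orderOf y = 4) :
    y = ofAdd 1 ∨ y = ofAdd 3 := by
  have : y ^ 2 ≠ 1 := pow_ne_one_of_lt_orderOf (by norm_num) (by omega)
  clear hy; revert y; decide

theorem eq_ofAdd_two {y : Multiplicative (ZMod 4)} (hy : orderOf y = 2) : y = ofAdd 2 := by
  have h1 : y ≠ 1 := by rintro rfl; simp at hy
  have h2 : y ^ 2 = 1 := hy ▸ pow_orderOf_eq_one y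
  clear hy; revert y; decide

theorem exists_zpow_ne_three (y : Multiplicative (ZMod 4)) :
    ∃ η : ℤˣ, y ^ (η : ℤ) ≠ ofAdd 3 := by
  by_cases hy : y = ofAdd 3
  · exact ⟨-1, by subst hy; decide⟩
  · exact ⟨1, by simpa using hy⟩

theorem exists_zpow_eq_one {y : Multiplicative (ZMod 4)} (hy : orderOf y = 4) :
    ∃ ε : ℤˣ, y ^ (ε : ℤ) = ofAdd 1 := by
  rcases eq_ofAdd_one_or_three hy with rfl | rfl
  exacts [⟨1, rfl⟩, ⟨-1, by decide⟩]

theorem exists_zpow_eq_one_and_shear {y : Multiplicative (ZMod 4)} (hy : orderOf y = 4)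
    (z : Multiplicative (ZMod 4)) :
    ∃ (ε : ℤˣ) (v : ZMod 4), y ^ (ε : ℤ) = ofAdd 1 ∧ y ^ v.val * z ^ (ε : ℤ) = ofAdd 0 := by
  rcases eq_ofAdd_one_or_three hy with rfl | rfl
  exacts [⟨1, -toAdd z, by revert z; decide⟩, ⟨-1, -toAdd z, by revert z; decide⟩]

theorem exists_shear_eq_zero_or_one (z : Multiplicative (ZMod 4)) :
    ∃ (ε : ℤˣ) (w : ZMod 2), ofAdd (2 : ZMod 4) ^ w.val * z ^ (ε : ℤ) = ofAdd 0 ∨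
      ofAdd (2 : ZMod 4) ^ w.val * z ^ (ε : ℤ) = ofAdd 1 := by
  obtain ⟨a, rfl⟩ := ofAdd.surjective z
  fin_cases a
  · exact ⟨1, 0, by decide⟩
  · exact ⟨1, 0, by decide⟩
  · exact ⟨1, 1, by decide⟩
  · exact ⟨-1, 0, by decide⟩

theorem ofAdd_two_zpow_units (ε : ℤˣ) : ofAdd (2 : ZMod 4) ^ (ε : ℤ) = ofAdd 2 := by
  rcases Int.units_eq_one_or ε with rfl | rfl <;> decide

end ZMod4

namespace OrbGroup

open CoprodI Multiplicative

def incA (i : Fin r) : Multiplicative ℤ →* OrbGroup r s t m n :=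
  of (M := Fac r s t m n) (i := .inl i)

def incB (j : Fin s) : Multiplicative (ZMod 4 × ℤ) →* OrbGroup r s t m n :=
  of (M := Fac r s t m n) (i := .inr (.inl j))

def incD (k : Fin t) : Multiplicative (ZMod 4) →* OrbGroup r s t m n :=
  of (M := Fac r s t m n) (i := .inr (.inr (.inl k)))

def incE (l : Fin m) : Multiplicative (ZMod 2 × ℤ) →* OrbGroup r s t m n :=
  of (M := Fac r s t m n) (i := .inr (.inr (.inr (.inl l))))

def incG (q : Fin n) : Multiplicative (ZMod 2) →* OrbGroup r s t m n :=
  of (M := Fac r s t m n) (i := .inr (.inr (.inr (.inr q))))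

theorem genA_eq_incA (i : Fin r) : (genA i : OrbGroup r s t m n) = incA i (ofAdd 1) := rfl

theorem genB_eq_incB (j : Fin s) : (genB j : OrbGroup r s t m n) = incB j (ofAdd (1, 0)) := rfl

theorem genC_eq_incB (j : Fin s) : (genC j : OrbGroup r s t m n) = incB j (ofAdd (0, 1)) := rfl

theorem genD_eq_incD (k : Fin t) : (genD k : OrbGroup r s t m n) = incD k (ofAdd 1) := rfl

theorem genE_eq_incE (l : Fin m) : (genE l : OrbGroup r s t m n) = incE l (ofAdd (1, 0)) := rfl

theorem genF_eq_incE (l : Fin m) : (genF l : OrbGroup r s t m n) = incE l (ofAdd (0, 1)) := rfl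

theorem genG_eq_incG (q : Fin n) : (genG q : OrbGroup r s t m n) = incG q (ofAdd 1) := rfl

theorem genA_zpow (i : Fin r) (x : ℤ) :
    (genA i : OrbGroup r s t m n) ^ x = incA i (ofAdd x) := by
  rw [genA_eq_incA, ← map_zpow, ← ofAdd_zsmul, zsmul_one, Int.cast_id]

theorem genB_zpow_mul_genC_zpow (j : Fin s) (x y : ℤ) :
    (genB j : OrbGroup r s t m n) ^ x * genC j ^ y = incB j (ofAdd ((x : ZMod 4), y)) := by
  rw [genB_eq_incB, genC_eq_incB, ← map_zpow (incB j), ← map_zpow (incB j), ← map_mul]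
  congr 1
  apply toAdd.injective
  ext <;> simp

theorem genD_zpow (k : Fin t) (x : ℤ) :
    (genD k : OrbGroup r s t m n) ^ x = incD k (ofAdd (x : ZMod 4)) := by
  rw [genD_eq_incD, ← map_zpow, ← ofAdd_zsmul, zsmul_one]

theorem genE_zpow_mul_genF_zpow (l : Fin m) (x y : ℤ) :
    (genE l : OrbGroup r s t m n) ^ x * genF l ^ y = incE l (ofAdd ((x : ZMod 2), y)) := by
  rw [genE_eq_incE, genF_eq_incE, ← map_zpow (incE l), ← map_zpow (incE l), ← map_mul]
  congr 1
  apply toAdd.injective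
  ext <;> simp

theorem genG_zpow (q : Fin n) (x : ℤ) :
    (genG q : OrbGroup r s t m n) ^ x = incG q (ofAdd (x : ZMod 2)) := by
  rw [genG_eq_incG, ← map_zpow, ← ofAdd_zsmul, zsmul_one]

theorem orderOf_genB (j : Fin s) : orderOf (genB j : OrbGroup r s t m n) = 4 := by
  rw [genB_eq_incB, orderOf_injective (incB j) (of_injective _), orderOf_ofAdd_eq_addOrderOf,
    Prod.addOrderOf]
  simp [ZMod.addOrderOf_one]

theorem orderOf_genD (k : Fin t) : orderOf (genD k : OrbGroup r s t m n) = 4 := by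
  rw [genD_eq_incD, orderOf_injective (incD k) (of_injective _), orderOf_ofAdd_eq_addOrderOf,
    ZMod.addOrderOf_one]

theorem orderOf_genE (l : Fin m) : orderOf (genE l : OrbGroup r s t m n) = 2 := by
  rw [genE_eq_incE, orderOf_injective (incE l) (of_injective _), orderOf_ofAdd_eq_addOrderOf,
    Prod.addOrderOf]
  simp [ZMod.addOrderOf_one]

theorem orderOf_genG (q : Fin n) : orderOf (genG q : OrbGroup r s t m n) = 2 := by
  rw [genG_eq_incG, orderOf_injective (incG q) (of_injective _), orderOf_ofAdd_eq_addOrderOf,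
    ZMod.addOrderOf_one]

def generators : Set (OrbGroup r s t m n) :=
  Set.range genA ∪ (Set.range genB ∪ (Set.range genC ∪ (Set.range genD ∪
    (Set.range genE ∪ (Set.range genF ∪ Set.range genG)))))

theorem closure_generators : Subgroup.closure (generators : Set (OrbGroup r s t m n)) = ⊤ := by
  refine eq_top_iff.2 fun x _ => CoprodI.induction_on x (Subgroup.one_mem _) ?_
    (fun _ _ => Subgroup.mul_mem _)
  have gen_mem {x} (hx : x ∈ (generators : Set (OrbGroup r s t m n))) (z : ℤ) :
      x ^ z ∈ Subgroup.closure generators :=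
    Subgroup.zpow_mem _ (Subgroup.subset_closure hx) z
  rintro (i | j | k | l | q) p
  · have h := gen_mem (x := genA i) (by simp [generators]) (toAdd p)
    rw [genA_zpow] at h
    exact h
  · have h := Subgroup.mul_mem _ (gen_mem (x := genB j) (by simp [generators]) (toAdd p).1.val)
      (gen_mem (x := genC j) (by simp [generators]) (toAdd p).2)
    rw [genB_zpow_mul_genC_zpow, Int.cast_natCast, ZMod.natCast_zmod_val] at h
    exact h
  · change Multiplicative (ZMod 4) at p
    have h := gen_mem (x := genD k) (by simp [generators]) (toAdd p).val
    rw [genD_zpow, Int.cast_natCast, ZMod.natCast_zmod_val] at h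
    exact h
  · have h := Subgroup.mul_mem _ (gen_mem (x := genE l) (by simp [generators]) (toAdd p).1.val)
      (gen_mem (x := genF l) (by simp [generators]) (toAdd p).2)
    rw [genE_zpow_mul_genF_zpow, Int.cast_natCast, ZMod.natCast_zmod_val] at h
    exact h
  · change Multiplicative (ZMod 2) at p
    have h := gen_mem (x := genG q) (by simp [generators]) (toAdd p).val
    rw [genG_zpow, Int.cast_natCast, ZMod.natCast_zmod_val] at h
    exact h

def freeSubst (T : Fin r → OrbGroup r s t m n) : OrbGroup r s t m n →* OrbGroup r s t m n :=
  lift fun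
    | .inl i => zpowersHom _ (T i)
    | .inr _ => of

section freeSubst

variable (T : Fin r → OrbGroup r s t m n)

@[simp]
theorem freeSubst_genA (i : Fin r) : freeSubst T (genA i) = T i := by
  show lift _ (of _) = _
  rw [lift_of]
  exact zpow_one (T i)

theorem freeSubst_of_inr {i : Fin s ⊕ Fin t ⊕ Fin m ⊕ Fin n} (x : Fac r s t m n (.inr i)) :
    freeSubst T (of x) = of x :=
  lift_of _ _

@[simp] theorem freeSubst_genB (j : Fin s) : freeSubst T (genB j) = genB j := freeSubst_of_inr T _

@[simp] theorem freeSubst_genC (j : Fin s) : freeSubst T (genC j) = genC j := freeSubst_of_inr T _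

@[simp] theorem freeSubst_genD (k : Fin t) : freeSubst T (genD k) = genD k := freeSubst_of_inr T _

@[simp] theorem freeSubst_genE (l : Fin m) : freeSubst T (genE l) = genE l := freeSubst_of_inr T _

@[simp] theorem freeSubst_genF (l : Fin m) : freeSubst T (genF l) = genF l := freeSubst_of_inr T _

@[simp] theorem freeSubst_genG (q : Fin n) : freeSubst T (genG q) = genG q := freeSubst_of_inr T _

end freeSubst

theorem freeSubst_comp_eq_id {T T' : Fin r → OrbGroup r s t m n}
    (h : ∀ i, freeSubst T (T' i) = genA i) : (freeSubst T).comp (freeSubst T') = .id _ := by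
  refine MonoidHom.eq_of_eqOn_dense closure_generators ?_
  rintro _ (⟨i, rfl⟩ | ⟨j, rfl⟩ | ⟨j, rfl⟩ | ⟨k, rfl⟩ | ⟨l, rfl⟩ | ⟨l, rfl⟩ | ⟨q, rfl⟩) <;>
    simp [h]

theorem freeSubst_bijective {T T' : Fin r → OrbGroup r s t m n}
    (h : ∀ i, freeSubst T (T' i) = genA i) (h' : ∀ i, freeSubst T' (T i) = genA i) :
    Function.Bijective (freeSubst T) :=
  Function.bijective_iff_has_inverse.2 ⟨freeSubst T',
    DFunLike.congr_fun (freeSubst_comp_eq_id h'), DFunLike.congr_fun (freeSubst_comp_eq_id h)⟩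

def permHom (γ : Equiv.Perm (Fin m)) : OrbGroup r s t m n →* OrbGroup r s t m n :=
  lift fun
    | .inl _ => of
    | .inr (.inl _) => of
    | .inr (.inr (.inl _)) => of
    | .inr (.inr (.inr (.inl l))) =>
      of (M := Fac r s t m n) (i := .inr (.inr (.inr (.inl (γ l)))))
    | .inr (.inr (.inr (.inr _))) => of

section permHom

variable (γ : Equiv.Perm (Fin m))

@[simp] theorem permHom_genA (i : Fin r) :
    permHom γ (genA i : OrbGroup r s t m n) = genA i := lift_of _ _

@[simp] theorem permHom_genB (j : Fin s) :
    permHom γ (genB j : OrbGroup r s t m n) = genB j := lift_of _ _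

@[simp] theorem permHom_genC (j : Fin s) :
    permHom γ (genC j : OrbGroup r s t m n) = genC j := lift_of _ _

@[simp] theorem permHom_genD (k : Fin t) :
    permHom γ (genD k : OrbGroup r s t m n) = genD k := lift_of _ _

@[simp] theorem permHom_genE (l : Fin m) :
    permHom γ (genE l : OrbGroup r s t m n) = genE (γ l) := lift_of _ _

@[simp] theorem permHom_genF (l : Fin m) :
    permHom γ (genF l : OrbGroup r s t m n) = genF (γ l) := lift_of _ _

@[simp] theorem permHom_genG (q : Fin n) :
    permHom γ (genG q : OrbGroup r s t m n) = genG q := lift_of _ _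

theorem permHom_comp_inv :
    (permHom γ : OrbGroup r s t m n →* _).comp (permHom γ⁻¹) = .id _ := by
  refine MonoidHom.eq_of_eqOn_dense closure_generators ?_
  rintro _ (⟨i, rfl⟩ | ⟨j, rfl⟩ | ⟨j, rfl⟩ | ⟨k, rfl⟩ | ⟨l, rfl⟩ | ⟨l, rfl⟩ | ⟨q, rfl⟩) <;>
    simp

def permAut : OrbGroup r s t m n ≃* OrbGroup r s t m n :=
  (permHom γ).toMulEquiv (permHom γ⁻¹) (by simpa using permHom_comp_inv γ⁻¹)
    (permHom_comp_inv γ)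

@[simp] theorem permAut_apply (x : OrbGroup r s t m n) : permAut γ x = permHom γ x := rfl

end permHom

structure FactorData (r s t m : ℕ) where
  signA : Fin r → ℤˣ
  signB : Fin s → ℤˣ
  shearB : Fin s → ZMod 4
  signD : Fin t → ℤˣ
  signF : Fin m → ℤˣ
  shearF : Fin m → ZMod 2

namespace FactorData

variable (D : FactorData r s t m)

def factorAut : ∀ i : Idx r s t m n, Fac r s t m n i ≃* Fac r s t m n i
  | .inl i => (DistribMulAction.toAddEquiv ℤ (D.signA i)).toMultiplicative
  | .inr (.inl j) => (AddEquiv.prodShear (D.signB j) (D.shearB j)).toMultiplicative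
  | .inr (.inr (.inl k)) => (DistribMulAction.toAddEquiv (ZMod 4) (D.signD k)).toMultiplicative
  | .inr (.inr (.inr (.inl l))) => (AddEquiv.prodShear (D.signF l) (D.shearF l)).toMultiplicative
  | .inr (.inr (.inr (.inr _))) => MulEquiv.refl _

def aut : OrbGroup r s t m n ≃* OrbGroup r s t m n := CoprodI.congrRight D.factorAut

theorem aut_incA (i : Fin r) (p : Multiplicative ℤ) :
    D.aut (incA i p : OrbGroup r s t m n) = incA i (ofAdd ((D.signA i : ℤ) • toAdd p)) :=
  congrRight_of D.factorAut (i := .inl i) p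

theorem aut_incB (j : Fin s) (p : Multiplicative (ZMod 4 × ℤ)) :
    D.aut (incB j p : OrbGroup r s t m n) =
      incB j (ofAdd (AddEquiv.prodShear (D.signB j) (D.shearB j) (toAdd p))) :=
  congrRight_of D.factorAut (i := .inr (.inl j)) p

theorem aut_incD (k : Fin t) (p : Multiplicative (ZMod 4)) :
    D.aut (incD k p : OrbGroup r s t m n) = incD k (ofAdd ((D.signD k : ℤ) • toAdd p)) :=
  congrRight_of D.factorAut (i := .inr (.inr (.inl k))) p

theorem aut_incE (l : Fin m) (p : Multiplicative (ZMod 2 × ℤ)) :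
    D.aut (incE l p : OrbGroup r s t m n) =
      incE l (ofAdd (AddEquiv.prodShear (D.signF l) (D.shearF l) (toAdd p))) :=
  congrRight_of D.factorAut (i := .inr (.inr (.inr (.inl l)))) p

theorem aut_incG (q : Fin n) (p : Multiplicative (ZMod 2)) :
    D.aut (incG q p : OrbGroup r s t m n) = incG q p :=
  congrRight_of D.factorAut (i := .inr (.inr (.inr (.inr q)))) p

@[simp]
theorem aut_genA (i : Fin r) :
    D.aut (genA i : OrbGroup r s t m n) = genA i ^ (D.signA i : ℤ) := by
  rw [genA_zpow, genA_eq_incA, aut_incA]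
  simp

@[simp]
theorem aut_genB (j : Fin s) :
    D.aut (genB j : OrbGroup r s t m n) = genB j ^ (D.signB j : ℤ) := by
  rw [← mul_one (genB j ^ _), ← zpow_zero (genC j), genB_zpow_mul_genC_zpow, genB_eq_incB,
    aut_incB]
  simp [AddEquiv.prodShear, Units.smul_def]

@[simp]
theorem aut_genC (j : Fin s) :
    D.aut (genC j : OrbGroup r s t m n) = genB j ^ (D.shearB j).val * genC j ^ (D.signB j : ℤ) := by
  rw [← zpow_natCast, genB_zpow_mul_genC_zpow, genC_eq_incB, aut_incB]
  simp [AddEquiv.prodShear, Units.smul_def]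

@[simp]
theorem aut_genD (k : Fin t) :
    D.aut (genD k : OrbGroup r s t m n) = genD k ^ (D.signD k : ℤ) := by
  rw [genD_zpow, genD_eq_incD, aut_incD]
  simp

@[simp]
theorem aut_genE (l : Fin m) :
    D.aut (genE l : OrbGroup r s t m n) = genE l ^ (D.signF l : ℤ) := by
  rw [← mul_one (genE l ^ _), ← zpow_zero (genF l), genE_zpow_mul_genF_zpow, genE_eq_incE,
    aut_incE]
  simp [AddEquiv.prodShear, Units.smul_def]

@[simp]
theorem aut_genF (l : Fin m) :
    D.aut (genF l : OrbGroup r s t m n) = genE l ^ (D.shearF l).val * genF l ^ (D.signF l : ℤ) := by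
  rw [← zpow_natCast, genE_zpow_mul_genF_zpow, genF_eq_incE, aut_incE]
  simp [AddEquiv.prodShear, Units.smul_def]

@[simp]
theorem aut_genG (q : Fin n) : D.aut (genG q : OrbGroup r s t m n) = genG q :=
  D.aut_incG q _

end FactorData

theorem admissible_permAut_trans_aut (γ : Equiv.Perm (Fin m)) (D : FactorData r s t m) :
    Admissible ((permAut γ).trans D.aut : OrbGroup r s t m n ≃* _) := by
  have sign (ε : ℤˣ) : (ε : ℤ) = 1 ∨ (ε : ℤ) = -1 := Int.isUnit_iff.1 ε.isUnit
  refine ⟨1, 1, γ, 1, 1, 1, 1, 1, fun j => D.signB j, fun k => D.signD k,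
    fun l => D.signF (γ l), 1, fun j => (D.shearB j).val, fun l => (D.shearF (γ l)).val,
    fun _ => sign _, fun _ => sign _, fun _ => sign _, fun _ => .inl rfl,
    fun _ => ZMod.val_lt _, fun _ => ZMod.val_lt _, ?_, ?_, ?_, ?_, ?_, ?_⟩ <;> intro <;> simp

end OrbGroup

open OrbGroup in
theorem Admissible.freeSubst_trans {β : OrbGroup r s t m n ≃* OrbGroup r s t m n}
    (hβ : Admissible β) {T : Fin r → OrbGroup r s t m n}
    (hT : Function.Bijective (freeSubst T)) :
    Admissible ((MulEquiv.ofBijective _ hT).trans β) := by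
  obtain ⟨σ, τ, γ, ξ, x, y, u, z, ε, δ, ε', δ', v, w, hε, hδ, hε', hδ', hv, hw,
    hb, hc, hd, he, hf, hg⟩ := hβ
  exact ⟨σ, τ, γ, ξ, x, y, u, z, ε, δ, ε', δ', v, w, hε, hδ, hε', hδ', hv, hw,
    fun j => by simpa using hb j, fun j => by simpa using hc j, fun k => by simpa using hd k,
    fun l => by simpa using he l, fun l => by simpa using hf l, fun q => by simpa using hg q⟩

namespace InjOnTorsion

open OrbGroup Multiplicative

variable {lam : OrbGroup r s t m n →* Multiplicative (ZMod 4)}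

theorem orderOf_map_genB (h : InjOnTorsion lam) (j : Fin s) : orderOf (lam (genB j)) = 4 :=
  (orderOf_map_of_injOn_zpowers lam (h.1 j)).trans (OrbGroup.orderOf_genB j)

theorem orderOf_map_genD (h : InjOnTorsion lam) (k : Fin t) : orderOf (lam (genD k)) = 4 :=
  (orderOf_map_of_injOn_zpowers lam (h.2.1 k)).trans (OrbGroup.orderOf_genD k)

theorem map_genE (h : InjOnTorsion lam) (l : Fin m) : lam (genE l) = ofAdd 2 :=
  ZMod4.eq_ofAdd_two ((orderOf_map_of_injOn_zpowers lam (h.2.2.1 l)).trans (orderOf_genE l))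

theorem map_genG (h : InjOnTorsion lam) (q : Fin n) : lam (genG q) = ofAdd 2 :=
  ZMod4.eq_ofAdd_two ((orderOf_map_of_injOn_zpowers lam (h.2.2.2 q)).trans (orderOf_genG q))

end InjOnTorsion

namespace OrbGroup

open Multiplicative

def IsNormalForm (μ : OrbGroup r s t m n →* Multiplicative (ZMod 4)) (k : ℕ) : Prop :=
  (∀ j : Fin s, μ (genB j) = ofAdd (1 : ZMod 4)) ∧
  (∀ j : Fin s, μ (genC j) = ofAdd (0 : ZMod 4)) ∧
  (∀ k' : Fin t, μ (genD k') = ofAdd (1 : ZMod 4)) ∧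
  (∀ l : Fin m, μ (genE l) = ofAdd (2 : ZMod 4)) ∧
  (∀ i : Fin m, (i : ℕ) < k → μ (genF i) = ofAdd (1 : ZMod 4)) ∧
  (∀ i : Fin m, k ≤ (i : ℕ) → μ (genF i) = ofAdd (0 : ZMod 4)) ∧
  (∀ q : Fin n, μ (genG q) = ofAdd (2 : ZMod 4))

theorem IsNormalForm.comp_freeSubst {μ : OrbGroup r s t m n →* Multiplicative (ZMod 4)} {k : ℕ}
    (h : IsNormalForm μ k) (T : Fin r → OrbGroup r s t m n) :
    IsNormalForm (μ.comp (freeSubst T)) k := by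
  simpa [IsNormalForm] using h

variable {lam : OrbGroup r s t m n →* Multiplicative (ZMod 4)}

theorem exists_factorData (hinj : InjOnTorsion lam) : ∃ D : FactorData r s t m,
    (∀ i, lam (D.aut (genA i)) ≠ ofAdd 3) ∧
    (∀ j, lam (D.aut (genB j)) = ofAdd 1) ∧ (∀ j, lam (D.aut (genC j)) = ofAdd 0) ∧
    (∀ k, lam (D.aut (genD k)) = ofAdd 1) ∧ (∀ l, lam (D.aut (genE l)) = ofAdd 2) ∧
    (∀ l, lam (D.aut (genF l)) = ofAdd 0 ∨ lam (D.aut (genF l)) = ofAdd 1) ∧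
    (∀ q, lam (D.aut (genG q)) = ofAdd 2) := by
  choose signA hA using fun i => ZMod4.exists_zpow_ne_three (lam (genA i))
  choose signB shearB hB hC using fun j =>
    ZMod4.exists_zpow_eq_one_and_shear (hinj.orderOf_map_genB j) (lam (genC j))
  choose signD hD using fun k => ZMod4.exists_zpow_eq_one (hinj.orderOf_map_genD k)
  choose signF shearF hF using fun l => ZMod4.exists_shear_eq_zero_or_one (lam (genF l))
  refine ⟨⟨signA, signB, shearB, signD, signF, shearF⟩, ?_, ?_, ?_, ?_, ?_, ?_, ?_⟩ <;>
    intro <;>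
    simp only [FactorData.aut_genA, FactorData.aut_genB, FactorData.aut_genC,
      FactorData.aut_genD, FactorData.aut_genE, FactorData.aut_genF, FactorData.aut_genG,
      map_mul, map_pow, map_zpow, hinj.map_genE, hinj.map_genG, ZMod4.ofAdd_two_zpow_units]
  exacts [hA _, hB _, hC _, hD _, hF _]

theorem exists_admissible_isNormalForm (hinj : InjOnTorsion lam) :
    ∃ (β : OrbGroup r s t m n ≃* OrbGroup r s t m n) (k : ℕ), Admissible β ∧ k ≤ m ∧
      IsNormalForm (lam.comp β.toMonoidHom) k ∧ ∀ i, lam (β (genA i)) ≠ ofAdd 3 := by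
  classical
  obtain ⟨D, hA, hB, hC, hD, hE, hF, hG⟩ := exists_factorData hinj
  obtain ⟨k, hk, γ, hγ⟩ := Fin.exists_perm_iff_lt fun l => lam (D.aut (genF l)) = ofAdd 1
  refine ⟨(permAut γ).trans D.aut, k, admissible_permAut_trans_aut γ D, hk,
    ⟨?_, ?_, ?_, ?_, ?_, ?_, ?_⟩, ?_⟩ <;> intro i <;>
    simp only [MonoidHom.comp_apply, MulEquiv.coe_toMonoidHom, MulEquiv.trans_apply,
      permAut_apply, permHom_genA, permHom_genB, permHom_genC, permHom_genD, permHom_genE,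
      permHom_genF, permHom_genG]
  exacts [hB i, hC i, hD i, hE _, fun h => (hγ i).2 h,
    fun h => (hF _).resolve_right fun h' => (not_lt.2 h) ((hγ i).1 h'), hG i, hA i]

theorem exists_mem_generators_odd (μ : OrbGroup r s t m n →* Multiplicative (ZMod 4))
    (hμ : Function.Surjective μ) : ∃ x ∈ generators, μ x = ofAdd 1 ∨ μ x = ofAdd 3 := by
  by_contra! h
  let parity : Multiplicative (ZMod 4) →* Multiplicative (ZMod 2) :=
    (ZMod.castHom (by norm_num : 2 ∣ 4) (ZMod 2)).toAddMonoidHom.toMultiplicative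
  have hparity : parity.comp μ = 1 := by
    refine MonoidHom.eq_of_eqOn_dense closure_generators fun x hx => ?_
    show parity (μ x) = 1
    have := h x hx
    generalize μ x = y at this
    revert y
    decide
  obtain ⟨x, hx⟩ := hμ (ofAdd 1)
  have := DFunLike.congr_fun hparity x
  rw [MonoidHom.comp_apply, hx, MonoidHom.one_apply] at this
  exact absurd this (by decide)

theorem exists_pivot {μ : OrbGroup r s t m n →* Multiplicative (ZMod 4)}
    (hμ : Function.Surjective μ) {k : ℕ} (hN : IsNormalForm μ k)
    (hA : ∀ i, μ (genA i) ≠ ofAdd 3) :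
    ∃ X, μ X = ofAdd 1 ∧
      ∀ T, (∀ i, μ (genA i) = ofAdd 1 → T i = genA i) → freeSubst T X = X := by
  obtain ⟨hB, hC, hD, hE, hF1, hF0, hG⟩ := hN
  obtain ⟨x, hx, hodd⟩ := exists_mem_generators_odd μ hμ
  rcases hx with ⟨i, rfl⟩ | ⟨j, rfl⟩ | ⟨j, rfl⟩ | ⟨k', rfl⟩ | ⟨l, rfl⟩ | ⟨l, rfl⟩ | ⟨q, rfl⟩
  · have h1 := hodd.resolve_right (hA i)
    exact ⟨genA i, h1, fun T hT => by rw [freeSubst_genA, hT i h1]⟩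
  · exact ⟨genB j, hB j, fun T _ => freeSubst_genB T j⟩
  · exact absurd (hC j ▸ hodd) (by decide)
  · exact ⟨genD k', hD k', fun T _ => freeSubst_genD T k'⟩
  · exact absurd (hE l ▸ hodd) (by decide)
  · by_cases hl : (l : ℕ) < k
    · exact ⟨genF l, hF1 l hl, fun T _ => freeSubst_genF T l⟩
    · exact absurd (hF0 l (not_lt.1 hl) ▸ hodd) (by decide)
  · exact absurd (hG q ▸ hodd) (by decide)

theorem exists_freeSubst_normalizing (μ : OrbGroup r s t m n →* Multiplicative (ZMod 4))
    {X : OrbGroup r s t m n} (hX : μ X = ofAdd 1)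
    (hfix : ∀ T, (∀ i, μ (genA i) = ofAdd 1 → T i = genA i) → freeSubst T X = X) :
    ∃ T, Function.Bijective (freeSubst T) ∧ ∀ i, μ (freeSubst T (genA i)) = ofAdd 1 := by
  let c i : ℤ := (1 - toAdd (μ (genA i))).val
  let T (z : ℤ) i := genA i * X ^ (z * c i)
  have hT (z w : ℤ) i : freeSubst (T z) (T w i) = genA i * X ^ ((z + w) * c i) := by
    have : freeSubst (T z) X = X := hfix _ fun i h => by simp [T, c, h]
    simp only [T, map_mul, map_zpow, freeSubst_genA, this, mul_assoc, ← zpow_add, add_mul]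
  refine ⟨T 1, freeSubst_bijective (T' := T (-1)) (fun i => ?_) (fun i => ?_), fun i => ?_⟩
  · simp [hT]
  · simp [hT]
  · apply toAdd.injective
    simp [T, c, hX]

end OrbGroup

theorem normalization {r s t m n : ℕ}
    (lam : OrbGroup r s t m n →* Multiplicative (ZMod 4))
    (hsurj : Function.Surjective lam) (hinj : InjOnTorsion lam) :
    ∃ (α : OrbGroup r s t m n ≃* OrbGroup r s t m n) (k : ℕ), Admissible α ∧ k ≤ m ∧
      (∀ i : Fin r, lam (α (genA i)) = Multiplicative.ofAdd (1 : ZMod 4)) ∧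
      (∀ j : Fin s, lam (α (genB j)) = Multiplicative.ofAdd (1 : ZMod 4)) ∧
      (∀ j : Fin s, lam (α (genC j)) = Multiplicative.ofAdd (0 : ZMod 4)) ∧
      (∀ k' : Fin t, lam (α (genD k')) = Multiplicative.ofAdd (1 : ZMod 4)) ∧
      (∀ l : Fin m, lam (α (genE l)) = Multiplicative.ofAdd (2 : ZMod 4)) ∧
      (∀ i : Fin m, (i : ℕ) < k → lam (α (genF i)) = Multiplicative.ofAdd (1 : ZMod 4)) ∧
      (∀ i : Fin m, k ≤ (i : ℕ) → lam (α (genF i)) = Multiplicative.ofAdd (0 : ZMod 4)) ∧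
      (∀ q : Fin n, lam (α (genG q)) = Multiplicative.ofAdd (2 : ZMod 4)) := by
  obtain ⟨β, k, hβ, hk, hN, hA⟩ := OrbGroup.exists_admissible_isNormalForm hinj
  let μ := lam.comp β.toMonoidHom
  obtain ⟨X, hX, hXfix⟩ := OrbGroup.exists_pivot (μ := μ) (hsurj.comp β.surjective) hN hA
  obtain ⟨T, hT, hTA⟩ := OrbGroup.exists_freeSubst_normalizing μ hX hXfix
  exact ⟨(MulEquiv.ofBijective _ hT).trans β, k, hβ.freeSubst_trans hT, hk, hTA,
    hN.comp_freeSubst T⟩
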